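/- arXiv:1501.04944 — 3 statements merged into one kernel-verified Lean document; each statement's English description precedes it below -/
import Mathlib

section
/- Let n be a positive even integer. Every U ∈ 𝒢ₙ admits a canonical decomposition, i.e., there exist an integer m ≥ 0, rotation axes p₁,…,p_m ∈ {x,y,z} with pᵢ ≠ pᵢ₊₁ for all 1 ≤ i < m, integers aᵢ with 1 ≤ aᵢ < n/2, and a 2×2 matrix D with e^{iφ}D ∈ 𝒞 for some φ ∈ ℝ, such that U = (∏_{i=1}^{m} U_{pᵢ}(aᵢπ/n)) · D. -/
attribute [local instance] Classical.propDecidable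

open Matrix Complex

noncomputable def H0 : Matrix (Fin 2) (Fin 2) ℂ :=
  (1 / 2 : ℂ) • !![1 + I, 1 + I; 1 + I, -1 - I]

noncomputable def Smat : Matrix (Fin 2) (Fin 2) ℂ := !![1, 0; 0, I]

noncomputable def Uz (θ : ℝ) : Matrix (Fin 2) (Fin 2) ℂ :=
  !![1, 0; 0, Complex.exp (I * θ)]

/-- The single-qubit Clifford group, the subgroup of U(2) generated by `H0` and `Smat`. -/
noncomputable def Cliff : Subgroup (Matrix.unitaryGroup (Fin 2) ℂ) :=
  Subgroup.closure {u : Matrix.unitaryGroup (Fin 2) ℂ |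
    (u : Matrix (Fin 2) (Fin 2) ℂ) = H0 ∨ (u : Matrix (Fin 2) (Fin 2) ℂ) = Smat}

/-- The Clifford-cyclotomic group `𝒢ₙ`, the subgroup of U(2) generated by the
Clifford group together with `Uz (π/n)`. -/
noncomputable def Gcc (n : ℕ) : Subgroup (Matrix.unitaryGroup (Fin 2) ℂ) :=
  Subgroup.closure ((Cliff : Set (Matrix.unitaryGroup (Fin 2) ℂ)) ∪
    {u : Matrix.unitaryGroup (Fin 2) ℂ |
      (u : Matrix (Fin 2) (Fin 2) ℂ) = Uz (Real.pi / n)})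

inductive RotAxis | x | y | z
  deriving DecidableEq

noncomputable def Pauli : RotAxis → Matrix (Fin 2) (Fin 2) ℂ
  | RotAxis.x => !![0, 1; 1, 0]
  | RotAxis.y => !![0, -I; I, 0]
  | RotAxis.z => !![1, 0; 0, -1]

/-- `U_p(θ) = ((1+e^{iθ})/2)·I + ((1−e^{iθ})/2)·P`. -/
noncomputable def Up (p : RotAxis) (θ : ℝ) : Matrix (Fin 2) (Fin 2) ℂ :=
  ((1 + Complex.exp (I * θ)) / 2) • (1 : Matrix (Fin 2) (Fin 2) ℂ) +
  ((1 - Complex.exp (I * θ)) / 2) • Pauli p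

/-- `U = (∏_{i=1}^{m} U_{pᵢ}(aᵢπ/n)) · D` is a canonical decomposition of `U`. -/
def IsCanonical (n m : ℕ) (p : ℕ → RotAxis) (a : ℕ → ℕ)
    (D U : Matrix (Fin 2) (Fin 2) ℂ) : Prop :=
  (∀ i, i + 1 < m → p i ≠ p (i + 1)) ∧
  (∀ i < m, 1 ≤ a i ∧ a i < n / 2) ∧
  (∃ φ : ℝ, ∃ C ∈ Cliff, Complex.exp (I * φ) • D = (C : Matrix (Fin 2) (Fin 2) ℂ)) ∧
  U = ((List.range m).map fun i => Up (p i) ((a i : ℝ) * Real.pi / n)).prod * D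

lemma pauli_mul_self (p : RotAxis) : Pauli p * Pauli p = 1 := by
  cases p <;> ext i j <;> fin_cases i <;> fin_cases j <;>
    simp [Pauli, Matrix.mul_apply, Fin.sum_univ_succ]

lemma pauli_star (p : RotAxis) : star (Pauli p) = Pauli p := by
  cases p <;> ext i j <;> fin_cases i <;> fin_cases j <;>
    simp [Pauli, star_eq_conjTranspose, Matrix.conjTranspose_apply]

lemma expI_real (t : ℝ) : Complex.exp (I * t) = Real.cos t + Real.sin t * I := by
  rw [mul_comm, Complex.exp_mul_I]
  norm_cast

lemma expI_pi_div_two : Complex.exp (I * ((Real.pi : ℂ)/2)) = I := by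
  have : ((Real.pi : ℂ)/2) = ((Real.pi/2 : ℝ) : ℂ) := by push_cast; ring
  rw [this, expI_real]; simp

lemma expI_neg_pi_div_two : Complex.exp (I * (-((Real.pi : ℂ)/2))) = -I := by
  have : (-((Real.pi : ℂ)/2)) = ((-(Real.pi/2) : ℝ) : ℂ) := by push_cast; ring
  rw [this, expI_real]; simp

lemma Up_pi_div_two (p : RotAxis) :
    Up p (Real.pi/2) = ((1+I)/2) • (1 : Matrix (Fin 2) (Fin 2) ℂ) + ((1-I)/2) • Pauli p := by
  rw [Up]
  congr 2 <;> rw [show ((Real.pi/2 : ℝ) : ℂ) = (Real.pi : ℂ)/2 by push_cast; ring,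
    expI_pi_div_two]

lemma H0_mul_Smat_mul_H0 : H0 * Smat * H0 = I • Up RotAxis.x (Real.pi/2) := by
  rw [Up_pi_div_two]
  ext i j <;> fin_cases i <;> fin_cases j <;>
    simp [H0, Smat, Pauli, Matrix.mul_apply, Fin.sum_univ_succ, Matrix.one_apply] <;> simp [Complex.ext_iff] <;> norm_num
namespace CCC

abbrev Mat := Matrix (Fin 2) (Fin 2) ℂ
abbrev UG := Matrix.unitaryGroup (Fin 2) ℂ

lemma expI_add (s t : ℝ) : Complex.exp (I * s) * Complex.exp (I * t)
    = Complex.exp (I * (s + t : ℝ)) := by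
  rw [← Complex.exp_add]; push_cast; ring_nf

lemma Up_mul (p : RotAxis) (s t : ℝ) : Up p s * Up p t = Up p (s + t) := by
  rw [Up, Up, Up]
  rw [add_mul, mul_add, mul_add, smul_mul_assoc, smul_mul_assoc, smul_mul_assoc,
    smul_mul_assoc, Matrix.mul_smul, Matrix.mul_smul, Matrix.mul_smul, Matrix.mul_smul,
    one_mul, mul_one, pauli_mul_self, smul_smul, smul_smul, smul_smul, smul_smul]
  rw [← expI_add s t]
  generalize Complex.exp (I * s) = a
  generalize Complex.exp (I * t) = b
  rw [one_mul]
  rw [show ((1+a)/2*((1+b)/2)) • (1:Mat) + ((1+a)/2*((1-b)/2)) • Pauli p +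
      (((1-a)/2*((1+b)/2)) • Pauli p + ((1-a)/2*((1-b)/2)) • (1:Mat)) =
      ((1+a)/2*((1+b)/2) + (1-a)/2*((1-b)/2)) • (1:Mat) +
      ((1+a)/2*((1-b)/2) + (1-a)/2*((1+b)/2)) • Pauli p by
    rw [add_smul, add_smul]; abel]
  rw [show (1+a)/2*((1+b)/2) + (1-a)/2*((1-b)/2) = (1 + a*b)/2 by ring,
    show (1+a)/2*((1-b)/2) + (1-a)/2*((1+b)/2) = (1 - a*b)/2 by ring]

lemma Up_zero (p : RotAxis) : Up p 0 = 1 := by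
  rw [Up]; push_cast; simp

lemma Up_star (p : RotAxis) : star (Up p t) = Up p (-t) := by
  rw [Up, Up, star_add, star_smul, star_smul, star_one, pauli_star]
  have he : (starRingEnd ℂ) (Complex.exp (I * (t:ℂ))) = Complex.exp (I * ((-t : ℝ) : ℂ)) := by
    rw [← Complex.exp_conj, _root_.map_mul, Complex.conj_I]
    push_cast [Complex.conj_ofReal]; ring_nf
  congr 2 <;> simp only [star_div₀, star_ofNat, RCLike.star_def, _root_.map_add, _root_.map_sub, _root_.map_one, he]

lemma Up_unitary (p : RotAxis) (t : ℝ) : Up p t ∈ Matrix.unitaryGroup (Fin 2) ℂ := by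
  constructor
  · rw [Up_star, Up_mul]; simp [Up_zero]
  · rw [Up_star, Up_mul]; simp [Up_zero]

noncomputable def upU (p : RotAxis) (t : ℝ) : UG := ⟨Up p t, Up_unitary p t⟩

end CCC
namespace CCC

lemma coe_mul (U V : UG) : ((U * V : UG) : Mat) = (U : Mat) * (V : Mat) := rfl

lemma coe_inv (U : UG) : ((U⁻¹ : UG) : Mat) = star (U : Mat) := by
  rw [← Unitary.star_eq_inv]; rfl

lemma coe_one : ((1 : UG) : Mat) = 1 := rfl

lemma H0_unitary : H0 ∈ Matrix.unitaryGroup (Fin 2) ℂ := by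
  rw [Matrix.mem_unitaryGroup_iff]
  ext i j <;> fin_cases i <;> fin_cases j <;>
    simp [H0, star_eq_conjTranspose, Matrix.conjTranspose_apply, Matrix.mul_apply,
      Fin.sum_univ_succ, Matrix.one_apply] <;> simp [Complex.ext_iff] <;> norm_num

lemma Smat_unitary : Smat ∈ Matrix.unitaryGroup (Fin 2) ℂ := by
  rw [Matrix.mem_unitaryGroup_iff]
  ext i j <;> fin_cases i <;> fin_cases j <;>
    simp [Smat, star_eq_conjTranspose, Matrix.conjTranspose_apply, Matrix.mul_apply,
      Fin.sum_univ_succ, Matrix.one_apply] <;> simp [Complex.ext_iff] <;> norm_num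

noncomputable def h0E : UG := ⟨H0, H0_unitary⟩
noncomputable def sE : UG := ⟨Smat, Smat_unitary⟩

lemma h0E_mem : h0E ∈ Cliff := Subgroup.subset_closure (Or.inl rfl)
lemma sE_mem : sE ∈ Cliff := Subgroup.subset_closure (Or.inr rfl)

lemma mem_cliff_of_coe_eq {A : Mat} (u : UG) (hu : u ∈ Cliff) (h : (u : Mat) = A)
    (v : UG) (hv : (v : Mat) = A) : v ∈ Cliff := by
  have : u = v := Subtype.ext (by rw [h, hv])
  rwa [← this]

-- Up z (π/2) = Smat
lemma Up_z_pi_div_two : Up RotAxis.z (Real.pi/2) = Smat := by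
  rw [Up_pi_div_two]
  ext i j <;> fin_cases i <;> fin_cases j <;>
    simp [Smat, Pauli, Matrix.one_apply] <;> simp [Complex.ext_iff] <;> norm_num

lemma smul_unitary {c : ℂ} (hc : c * star c = 1) {A : Mat}
    (hA : A ∈ Matrix.unitaryGroup (Fin 2) ℂ) : c • A ∈ Matrix.unitaryGroup (Fin 2) ℂ := by
  rw [Matrix.mem_unitaryGroup_iff] at hA ⊢
  rw [star_smul, Matrix.smul_mul, Matrix.mul_smul, hA, smul_smul, hc, one_smul]

lemma sxU_mem : upU RotAxis.x (Real.pi/2) ∈ Cliff := by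
  have h1 : (((h0E * h0E)⁻¹ * (h0E * sE * h0E) : UG) : Mat) = Up RotAxis.x (Real.pi/2) := by
    rw [coe_mul, coe_inv, coe_mul, coe_mul, coe_mul]
    show star (H0 * H0) * (H0 * Smat * H0) = _
    rw [H0_mul_Smat_mul_H0]
    have h2 : H0 * H0 = I • (1 : Mat) := by
      ext i j <;> fin_cases i <;> fin_cases j <;>
        simp [H0, Matrix.mul_apply, Fin.sum_univ_succ, Matrix.one_apply] <;>
        simp [Complex.ext_iff] <;> norm_num
    rw [h2, star_smul, star_one, Matrix.smul_mul, Matrix.one_mul, smul_smul]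
    simp [Complex.conj_I]
  exact mem_cliff_of_coe_eq _ (Subgroup.mul_mem _ (Subgroup.inv_mem _
    (Subgroup.mul_mem _ h0E_mem h0E_mem))
    (Subgroup.mul_mem _ (Subgroup.mul_mem _ h0E_mem sE_mem) h0E_mem)) h1 _ rfl

lemma szU_mem : upU RotAxis.z (Real.pi/2) ∈ Cliff := by
  refine mem_cliff_of_coe_eq _ sE_mem rfl _ ?_
  exact Up_z_pi_div_two

lemma syU_mem : upU RotAxis.y (Real.pi/2) ∈ Cliff := by
  have key : Smat * Up RotAxis.x (Real.pi/2) = Up RotAxis.y (Real.pi/2) * Smat := by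
    rw [Up_pi_div_two, Up_pi_div_two]
    ext i j <;> fin_cases i <;> fin_cases j <;>
      simp [Smat, Pauli, Matrix.mul_apply, Fin.sum_univ_succ, Matrix.one_apply] <;>
      simp [Complex.ext_iff] <;> norm_num
  have h1 : ((sE * upU RotAxis.x (Real.pi/2) * sE⁻¹ : UG) : Mat) = Up RotAxis.y (Real.pi/2) := by
    rw [coe_mul, coe_mul, coe_inv]
    show Smat * Up RotAxis.x (Real.pi/2) * star Smat = _
    rw [key, Matrix.mul_assoc]
    have : Smat * star Smat = 1 := Matrix.mem_unitaryGroup_iff.mp Smat_unitary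
    rw [this, Matrix.mul_one]
  exact mem_cliff_of_coe_eq _ (Subgroup.mul_mem _ (Subgroup.mul_mem _ sE_mem sxU_mem)
    (Subgroup.inv_mem _ sE_mem)) h1 _ rfl

lemma spU_mem (p : RotAxis) : upU p (Real.pi/2) ∈ Cliff := by
  cases p
  · exact sxU_mem
  · exact syU_mem
  · exact szU_mem

end CCC
namespace CCC

instance : Fintype RotAxis :=
  ⟨⟨{RotAxis.x, RotAxis.y, RotAxis.z}, by decide⟩, fun a => by cases a <;> decide⟩

lemma pauli_ne_smul : ∀ p q : RotAxis, (Pauli p = Pauli q ∨ Pauli p = -Pauli q) → p = q := by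
  intro p q h
  cases p <;> cases q <;> try rfl
  all_goals
    exfalso
    rcases h with h | h <;>
    · rw [← Matrix.ext_iff] at h
      simp [Pauli, Fin.forall_fin_two, Matrix.neg_apply, Complex.ext_iff] at h

lemma coe_mul_star (U : UG) : (U : Mat) * star (U : Mat) = 1 :=
  Unitary.mul_star_self_of_mem U.prop

lemma star_mul_coe (U : UG) : star (U : Mat) * (U : Mat) = 1 :=
  Unitary.star_mul_self_of_mem U.prop

lemma mul_left_cancel_UG (U : UG) {A B : Mat} (h : (U : Mat) * A = (U : Mat) * B) : A = B := by
  have := congrArg (fun M => star (U : Mat) * M) h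
  simpa [← Matrix.mul_assoc, Unitary.coe_star_mul_self] using this

lemma mul_right_cancel_UG (U : UG) {A B : Mat} (h : A * (U : Mat) = B * (U : Mat)) : A = B := by
  have := congrArg (fun M => M * star (U : Mat)) h
  simpa [Matrix.mul_assoc, Unitary.coe_mul_star_self] using this

def PRel (C : Mat) (p q : RotAxis) : Prop :=
  C * Pauli p = Pauli q * C ∨ C * Pauli p = -(Pauli q * C)

lemma pconj (C : UG) (hC : C ∈ Cliff) : ∀ p, ∃ q, PRel (C : Mat) p q := by
  induction hC using Subgroup.closure_induction with
  | mem u hu =>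
    intro p
    rcases hu with h | h <;> rw [h] <;> cases p
    · exact ⟨RotAxis.z, Or.inl (by
        ext i j <;> fin_cases i <;> fin_cases j <;>
          simp [H0, Pauli, Matrix.mul_apply, Fin.sum_univ_succ] <;>
          simp [Complex.ext_iff] <;> norm_num)⟩
    · exact ⟨RotAxis.y, Or.inr (by
        ext i j <;> fin_cases i <;> fin_cases j <;>
          simp [H0, Pauli, Matrix.mul_apply, Fin.sum_univ_succ, Matrix.neg_apply] <;>
          simp [Complex.ext_iff] <;> norm_num)⟩
    · exact ⟨RotAxis.x, Or.inl (by
        ext i j <;> fin_cases i <;> fin_cases j <;>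
          simp [H0, Pauli, Matrix.mul_apply, Fin.sum_univ_succ] <;>
          simp [Complex.ext_iff] <;> norm_num)⟩
    · exact ⟨RotAxis.y, Or.inl (by
        ext i j <;> fin_cases i <;> fin_cases j <;>
          simp [Smat, Pauli, Matrix.mul_apply, Fin.sum_univ_succ] <;>
          simp [Complex.ext_iff] <;> norm_num)⟩
    · exact ⟨RotAxis.x, Or.inr (by
        ext i j <;> fin_cases i <;> fin_cases j <;>
          simp [Smat, Pauli, Matrix.mul_apply, Fin.sum_univ_succ, Matrix.neg_apply] <;>
          simp [Complex.ext_iff] <;> norm_num)⟩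
    · exact ⟨RotAxis.z, Or.inl (by
        ext i j <;> fin_cases i <;> fin_cases j <;>
          simp [Smat, Pauli, Matrix.mul_apply, Fin.sum_univ_succ] <;>
          simp [Complex.ext_iff] <;> norm_num)⟩
  | one => exact fun p => ⟨p, Or.inl (by rw [coe_one, Matrix.one_mul, Matrix.mul_one])⟩
  | mul a b _ _ iha ihb =>
    intro p
    obtain ⟨q, hq⟩ := ihb p
    obtain ⟨r, hr⟩ := iha q
    refine ⟨r, ?_⟩
    rw [PRel, coe_mul, Matrix.mul_assoc]
    rcases hq with hq | hq <;> rcases hr with hr | hr <;> rw [hq]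
    · rw [← Matrix.mul_assoc, hr, Matrix.mul_assoc]; exact Or.inl rfl
    · rw [← Matrix.mul_assoc, hr]; exact Or.inr (by rw [Matrix.neg_mul, Matrix.mul_assoc])
    · rw [Matrix.mul_neg, ← Matrix.mul_assoc, hr, Matrix.mul_assoc]; exact Or.inr rfl
    · rw [Matrix.mul_neg, ← Matrix.mul_assoc, hr]
      exact Or.inl (by rw [Matrix.neg_mul, neg_neg, Matrix.mul_assoc])
  | inv a ha ih =>
    have hf : ∀ p, ∃ q, PRel (a : Mat) p q := ih
    classical
    choose f hfs using hf
    have hinj : Function.Injective f := by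
      intro p p' hpp
      apply pauli_ne_smul
      have h1 := hfs p
      have h2 := hfs p'
      rw [hpp] at h1
      rcases h1 with h1 | h1 <;> rcases h2 with h2 | h2
      · exact Or.inl (mul_left_cancel_UG a (h1.trans h2.symm))
      · refine Or.inr (mul_left_cancel_UG a ?_)
        rw [Matrix.mul_neg, h2, neg_neg, h1]
      · refine Or.inr (mul_left_cancel_UG a ?_)
        rw [Matrix.mul_neg, h2, h1]
      · refine Or.inl (mul_left_cancel_UG a ?_)
        have := congrArg Neg.neg (h1.trans h2.symm)
        simpa using this
    have hsurj : Function.Surjective f := Finite.surjective_of_injective hinj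
    intro q
    obtain ⟨p, hp⟩ := hsurj q
    refine ⟨p, ?_⟩
    have h := hfs p
    rw [hp] at h
    rw [PRel, coe_inv]
    rcases h with h | h
    · left
      apply mul_left_cancel_UG a
      rw [← Matrix.mul_assoc, ← Matrix.mul_assoc, coe_mul_star, Matrix.one_mul]
      rw [h, Matrix.mul_assoc, coe_mul_star, Matrix.mul_one]
    · right
      apply mul_left_cancel_UG a
      rw [Matrix.mul_neg, ← Matrix.mul_assoc, ← Matrix.mul_assoc, coe_mul_star,
        Matrix.one_mul]
      rw [h, Matrix.neg_mul, neg_neg, Matrix.mul_assoc, coe_mul_star, Matrix.mul_one]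

end CCC
namespace CCC

lemma prel_mul {A B : UG} {p q r : RotAxis} (hA : PRel (A : Mat) p q)
    (hB : PRel (B : Mat) q r) : PRel ((B * A : UG) : Mat) p r := by
  rw [PRel, coe_mul, Matrix.mul_assoc]
  rcases hA with hA | hA <;> rcases hB with hB | hB <;> rw [hA]
  · rw [← Matrix.mul_assoc, hB, Matrix.mul_assoc]; exact Or.inl rfl
  · rw [← Matrix.mul_assoc, hB]; exact Or.inr (by rw [Matrix.neg_mul, Matrix.mul_assoc])
  · rw [Matrix.mul_neg, ← Matrix.mul_assoc, hB, Matrix.mul_assoc]; exact Or.inr rfl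
  · rw [Matrix.mul_neg, ← Matrix.mul_assoc, hB]
    exact Or.inl (by rw [Matrix.neg_mul, neg_neg, Matrix.mul_assoc])

lemma prel_right_inj {C : UG} {p p' q : RotAxis} (h : PRel (C : Mat) p q)
    (h' : PRel (C : Mat) p' q) : p = p' := by
  apply pauli_ne_smul
  rcases h with h | h <;> rcases h' with h' | h'
  · exact Or.inl (mul_left_cancel_UG C (h.trans h'.symm))
  · refine Or.inr (mul_left_cancel_UG C ?_)
    rw [Matrix.mul_neg, h', neg_neg, h]
  · refine Or.inr (mul_left_cancel_UG C ?_)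
    rw [Matrix.mul_neg, h', h]
  · refine Or.inl (mul_left_cancel_UG C ?_)
    have := congrArg Neg.neg (h.trans h'.symm)
    simpa using this

lemma pauli_comm_up (q : RotAxis) (t : ℝ) : Up q t * Pauli q = Pauli q * Up q t := by
  rw [Up, Matrix.add_mul, Matrix.mul_add, Matrix.smul_mul, Matrix.smul_mul,
    Matrix.mul_smul, Matrix.mul_smul, Matrix.one_mul, Matrix.mul_one, pauli_mul_self]

lemma prel_upU (q : RotAxis) (t : ℝ) : PRel ((upU q t : UG) : Mat) q q := by
  left
  show Up q t * Pauli q = Pauli q * Up q t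
  exact pauli_comm_up q t

lemma prel_upU_inv (q : RotAxis) (t : ℝ) : PRel (((upU q t)⁻¹ : UG) : Mat) q q := by
  rw [coe_inv]
  left
  show star (Up q t) * Pauli q = Pauli q * star (Up q t)
  rw [Up_star]
  exact pauli_comm_up q (-t)

lemma push_pos {C : UG} {p q : RotAxis} (h : (C : Mat) * Pauli p = Pauli q * (C : Mat))
    (t : ℝ) : (C : Mat) * Up p t = Up q t * (C : Mat) := by
  rw [Up, Up, Matrix.mul_add, Matrix.add_mul, Matrix.mul_smul, Matrix.mul_smul,
    Matrix.smul_mul, Matrix.smul_mul, Matrix.mul_one, Matrix.one_mul, h]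

lemma push_neg {C : UG} {p q : RotAxis} (h : (C : Mat) * Pauli p = -(Pauli q * (C : Mat)))
    (t : ℝ) : (C : Mat) * Up p t = Complex.exp (I * t) • (Up q (-t) * (C : Mat)) := by
  rw [Up, Up, Matrix.mul_add, Matrix.mul_smul, Matrix.mul_smul, Matrix.mul_one, h]
  rw [Matrix.add_mul, Matrix.smul_mul, Matrix.smul_mul, Matrix.one_mul, smul_add,
    smul_smul, smul_smul]
  have he : Complex.exp (I * (t:ℂ)) * Complex.exp (-(I * (t:ℂ))) = 1 := by
    rw [← Complex.exp_add]; ring_nf; exact Complex.exp_zero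
  have h1 : Complex.exp (I * t) * ((1 + Complex.exp (I * ((-t : ℝ) : ℂ))) / 2)
      = (1 + Complex.exp (I * (t:ℂ))) / 2 := by
    push_cast
    field_simp
    rw [mul_add, he]; ring
  have h2 : Complex.exp (I * t) * ((1 - Complex.exp (I * ((-t : ℝ) : ℂ))) / 2)
      = -((1 - Complex.exp (I * (t:ℂ))) / 2) := by
    push_cast
    field_simp
    rw [mul_sub, he]; ring
  rw [h1, h2]
  rw [smul_neg, neg_smul]

end CCC
namespace CCC

def ValidL (n : ℕ) (L : List (RotAxis × ℕ)) : Prop :=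
  List.Chain' (fun a b => a.1 ≠ b.1) L ∧ ∀ x ∈ L, 1 ≤ x.2 ∧ x.2 < n / 2

noncomputable def wprod (n : ℕ) (L : List (RotAxis × ℕ)) : Mat :=
  (L.map fun x => Up x.1 ((x.2 : ℝ) * Real.pi / n)).prod

lemma wprod_nil (n : ℕ) : wprod n [] = 1 := rfl

lemma wprod_cons (n : ℕ) (x : RotAxis × ℕ) (L : List (RotAxis × ℕ)) :
    wprod n (x :: L) = Up x.1 ((x.2 : ℝ) * Real.pi / n) * wprod n L := by
  rw [wprod, List.map_cons, List.prod_cons]; rfl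

lemma validL_nil (n : ℕ) : ValidL n [] := ⟨List.isChain_nil, by simp⟩

lemma validL_cons_iff {n : ℕ} {x : RotAxis × ℕ} {L : List (RotAxis × ℕ)} :
    ValidL n (x :: L) ↔ (∀ y ∈ L.head?, x.1 ≠ y.1) ∧ (1 ≤ x.2 ∧ x.2 < n / 2) ∧ ValidL n L := by
  constructor
  · rintro ⟨hc, hm⟩
    replace hc := List.isChain_cons.mp hc
    exact ⟨hc.1, hm x (by simp), hc.2, fun y hy => hm y (by simp [hy])⟩
  · rintro ⟨h1, h2, hc, hm⟩
    exact ⟨List.isChain_cons.mpr ⟨h1, hc⟩, by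
      intro y hy
      rcases List.mem_cons.mp hy with h | h
      · rw [h]; exact h2
      · exact hm y h⟩

lemma half_cast {n : ℕ} (hn : 0 < n) (hne : Even n) : ((n / 2 : ℕ) : ℝ) * 2 = (n : ℝ) := by
  have : n / 2 * 2 = n := Nat.div_mul_cancel hne.two_dvd
  exact_mod_cast congrArg (Nat.cast : ℕ → ℝ) this

lemma clfPush (n : ℕ) (hn : 0 < n) (hne : Even n) :
    ∀ (L : List (RotAxis × ℕ)), ValidL n L → ∀ (C : UG), C ∈ Cliff →
    ∃ (L' : List (RotAxis × ℕ)) (φ : ℝ) (C' : UG), C' ∈ Cliff ∧ ValidL n L' ∧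
      (C : Mat) * wprod n L = Complex.exp (I * φ) • (wprod n L' * (C' : Mat)) ∧
      (L = [] → L' = []) ∧
      (∀ x rest, L = x :: rest →
        ∃ q b rest', L' = (q, b) :: rest' ∧ PRel (C : Mat) x.1 q) := by
  intro L
  induction L with
  | nil =>
    intro _ C hC
    refine ⟨[], 0, C, hC, validL_nil n, ?_, fun _ => rfl, by simp⟩
    simp [wprod_nil]
  | cons x rest ih =>
    intro hL C hC
    obtain ⟨hhead, ⟨hx1, hx2⟩, hrest⟩ := validL_cons_iff.mp hL
    obtain ⟨p, a⟩ := x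
    simp only at hhead hx1 hx2
    obtain ⟨q, hq⟩ := pconj C hC p
    set θ : ℝ := (a : ℝ) * Real.pi / n with hθ
    rcases hq with hq | hq
    · -- positive case
      obtain ⟨L₁, φ₁, C', hC', hL₁, heq, hnil, hhd⟩ := ih hrest C hC
      refine ⟨(q, a) :: L₁, φ₁, C', hC', ?_, ?_, by simp, ?_⟩
      · rw [validL_cons_iff]
        refine ⟨?_, ⟨hx1, hx2⟩, hL₁⟩
        intro y hy
        rcases L₁ with _ | ⟨y₁, L₂⟩
        · simp at hy
        · simp at hy
          subst hy
          cases rest with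
          | nil => exact absurd (hnil rfl) (List.cons_ne_nil _ _)
          | cons x₂ rest₂ =>
            obtain ⟨q₂, b₂, rest₂', hL₁eq, hq₂⟩ := hhd x₂ rest₂ rfl
            injection hL₁eq with he1 he2
            have hy1 : y₁.1 = q₂ := by rw [he1]
            intro hqy
            apply hhead x₂ (by simp)
            rw [← hy1, ← hqy] at hq₂
            exact prel_right_inj (Or.inl hq) hq₂
      · rw [wprod_cons, ← Matrix.mul_assoc, push_pos hq θ, Matrix.mul_assoc, heq,
          Matrix.mul_smul, wprod_cons, Matrix.mul_assoc]
      · intro x' rest' hx'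
        obtain ⟨he1, he2⟩ := List.cons.injEq _ _ _ _ ▸ hx'
        exact ⟨q, a, L₁, rfl, by rw [← he1]; exact Or.inl hq⟩
    · -- negative case
      set K : UG := upU q (Real.pi / 2) with hK
      set C₂ : UG := K⁻¹ * C with hC₂def
      have hC₂ : C₂ ∈ Cliff := Subgroup.mul_mem _ (Subgroup.inv_mem _ (spU_mem q)) hC
      obtain ⟨L₁, φ₁, C', hC', hL₁, heq, hnil, hhd⟩ := ih hrest C₂ hC₂
      set a' : ℕ := n / 2 - a with ha'
      have ha'1 : 1 ≤ a' := by omega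
      have ha'2 : a' < n / 2 := by omega
      have hrecomb : Up q ((a' : ℝ) * Real.pi / n) * ((K⁻¹ : UG) : Mat) = Up q (-θ) := by
        rw [coe_inv]
        show _ * star (Up q (Real.pi / 2)) = _
        have hc := half_cast hn hne
        have hnR : (n : ℝ) ≠ 0 := Nat.cast_ne_zero.mpr hn.ne'
        have hacast : ((a' : ℕ) : ℝ) = ((n / 2 : ℕ) : ℝ) - (a : ℝ) := by
          rw [ha']
          push_cast [Nat.cast_sub (le_of_lt hx2)]
          ring
        have hhalf : ((n / 2 : ℕ) : ℝ) = (n : ℝ) / 2 := by linarith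
        have harg : (a' : ℝ) * Real.pi / n + (-(Real.pi / 2)) = -θ := by
          rw [hacast, hhalf, hθ]
          field_simp
          ring
        rw [Up_star, Up_mul, harg]
      refine ⟨(q, a') :: L₁, θ + φ₁, C', hC', ?_, ?_, by simp, ?_⟩
      · rw [validL_cons_iff]
        refine ⟨?_, ⟨ha'1, ha'2⟩, hL₁⟩
        intro y hy
        rcases L₁ with _ | ⟨y₁, L₂⟩
        · simp at hy
        · simp at hy
          subst hy
          cases rest with
          | nil => exact absurd (hnil rfl) (List.cons_ne_nil _ _)
          | cons x₂ rest₂ =>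
            obtain ⟨q₂, b₂, rest₂', hL₁eq, hq₂⟩ := hhd x₂ rest₂ rfl
            injection hL₁eq with he1 he2
            have hy1 : y₁.1 = q₂ := by rw [he1]
            intro hqy
            apply hhead x₂ (by simp)
            -- from PRel C₂ x₂.1 q and PRel K q q get PRel C x₂.1 q
            rw [← hy1, ← hqy] at hq₂
            have hKrel : PRel ((K : UG) : Mat) q q := prel_upU q (Real.pi / 2)
            have : PRel ((K * C₂ : UG) : Mat) x₂.1 q := prel_mul hq₂ hKrel
            rw [hC₂def, mul_inv_cancel_left] at this
            exact prel_right_inj (Or.inr hq) this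
      · rw [wprod_cons, ← Matrix.mul_assoc, push_neg hq θ, Matrix.smul_mul, Matrix.mul_assoc,
          ← hrecomb]
        rw [Matrix.mul_assoc (Up q ((a' : ℝ) * Real.pi / n))]
        have : ((K⁻¹ : UG) : Mat) * ((C : Mat) * wprod n rest) = (C₂ : Mat) * wprod n rest := by
          rw [hC₂def, coe_mul, Matrix.mul_assoc]
        rw [this, heq, Matrix.mul_smul, smul_smul, expI_add, wprod_cons, Matrix.mul_assoc]
      · intro x' rest' hx'
        obtain ⟨he1, he2⟩ := List.cons.injEq _ _ _ _ ▸ hx'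
        exact ⟨q, a', L₁, rfl, by rw [← he1]; exact Or.inr hq⟩

end CCC
namespace CCC

def PhaseCliff (D : Mat) : Prop :=
  ∃ φ : ℝ, ∃ C ∈ Cliff, Complex.exp (I * φ) • D = (C : Mat)

def CanonU (n : ℕ) (U : UG) : Prop :=
  ∃ L D, ValidL n L ∧ PhaseCliff D ∧ (U : Mat) = wprod n L * D

lemma phaseCliff_absorb {D : Mat} (hD : PhaseCliff D) (φ : ℝ) (C' : UG) (hC' : C' ∈ Cliff) :
    PhaseCliff (Complex.exp (I * φ) • ((C' : Mat) * D)) := by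
  obtain ⟨ψ, C₀, hC₀, hψ⟩ := hD
  refine ⟨ψ - φ, C' * C₀, Subgroup.mul_mem _ hC' hC₀, ?_⟩
  rw [smul_smul, expI_add, coe_mul]
  have : ψ - φ + φ = ψ := by ring
  rw [this, ← hψ, Matrix.mul_smul]

lemma canon_clifford_core {n : ℕ} (hn : 0 < n) (hne : Even n) (C : UG) (hC : C ∈ Cliff)
    {L : List (RotAxis × ℕ)} {D : Mat} (hL : ValidL n L) (hD : PhaseCliff D) :
    ∃ L' D', ValidL n L' ∧ PhaseCliff D' ∧
      (C : Mat) * (wprod n L * D) = wprod n L' * D' ∧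
      (L = [] → L' = []) ∧
      (∀ x rest, L = x :: rest →
        ∃ q b rest', L' = (q, b) :: rest' ∧ PRel (C : Mat) x.1 q) := by
  obtain ⟨L', φ, C', hC', hL', heq, hnil, hhd⟩ := clfPush n hn hne L hL C hC
  refine ⟨L', Complex.exp (I * φ) • ((C' : Mat) * D),
    hL', phaseCliff_absorb hD φ C' hC', ?_, hnil, hhd⟩
  rw [← Matrix.mul_assoc, heq, Matrix.smul_mul, Matrix.mul_assoc, Matrix.mul_smul]

lemma canon_mul_clifford {n : ℕ} (hn : 0 < n) (hne : Even n) (C : UG) (hC : C ∈ Cliff)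
    (V : UG) (hV : CanonU n V) : CanonU n (C * V) := by
  obtain ⟨L, D, hL, hD, hVeq⟩ := hV
  obtain ⟨L', D', hL', hD', heq, -, -⟩ := canon_clifford_core hn hne C hC hL hD
  exact ⟨L', D', hL', hD', by rw [coe_mul, hVeq, heq]⟩

lemma canon_one (n : ℕ) : CanonU n 1 := by
  refine ⟨[], 1, validL_nil n, ⟨0, 1, Subgroup.one_mem _, by simp [coe_one]⟩, ?_⟩
  simp [wprod_nil, coe_one]

lemma Uz_eq_Up (t : ℝ) : Uz t = Up RotAxis.z t := by
  rw [Uz, Up]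
  ext i j <;> fin_cases i <;> fin_cases j <;>
    simp [Pauli, Matrix.one_apply] <;> ring

end CCC
namespace CCC

lemma coe_x_inv_eq {n : ℕ} (x : UG) (hx : (x : Mat) = Uz (Real.pi / n)) :
    ((x⁻¹ : UG) : Mat) = Up RotAxis.z (-(Real.pi / n)) := by
  rw [coe_inv, hx, Uz_eq_Up, Up_star]

lemma canon_mul_uz {n : ℕ} (hn4 : 4 ≤ n) (hne : Even n) (x V : UG)
    (hx : (x : Mat) = Uz (Real.pi / n)) (hV : CanonU n V) : CanonU n (x * V) := by
  have hn : 0 < n := by omega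
  have hnR : (n : ℝ) ≠ 0 := Nat.cast_ne_zero.mpr hn.ne'
  have hh2 : 2 ≤ n / 2 := by omega
  have hxz : (x : Mat) = Up RotAxis.z (Real.pi / n) := by rw [hx, Uz_eq_Up]
  obtain ⟨L, D, hL, hD, hVeq⟩ := hV
  have hone : ((1 : ℕ) : ℝ) * Real.pi / n = Real.pi / n := by norm_num
  cases L with
  | nil =>
    refine ⟨[(RotAxis.z, 1)], D, ?_, hD, ?_⟩
    · rw [validL_cons_iff]
      exact ⟨by simp, ⟨le_refl 1, by omega⟩, validL_nil n⟩
    · rw [coe_mul, hVeq, hxz]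
      simp only [wprod_cons, wprod_nil, hone, Matrix.one_mul, Matrix.mul_one, Matrix.mul_assoc]
  | cons hd rest =>
    obtain ⟨p, a⟩ := hd
    obtain ⟨hhead, ⟨ha1, ha2⟩, hrest⟩ := validL_cons_iff.mp hL
    simp only at hhead ha1 ha2
    by_cases hpz : p = RotAxis.z
    · subst hpz
      by_cases ha : a + 1 < n / 2
      · refine ⟨(RotAxis.z, a + 1) :: rest, D, ?_, hD, ?_⟩
        · rw [validL_cons_iff]
          exact ⟨hhead, ⟨by omega, ha⟩, hrest⟩
        · have key : Up RotAxis.z (Real.pi / n) * Up RotAxis.z ((a : ℝ) * Real.pi / n)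
              = Up RotAxis.z (((a + 1 : ℕ) : ℝ) * Real.pi / n) := by
            rw [Up_mul]
            congr 1
            push_cast
            field_simp
            ring
          rw [coe_mul, hVeq, hxz, wprod_cons, wprod_cons, ← Matrix.mul_assoc,
            ← Matrix.mul_assoc, key]
      · have haeq : a + 1 = n / 2 := by omega
        have hhalfc : ((n / 2 : ℕ) : ℝ) = (n : ℝ) / 2 := by
          have := half_cast hn hne; linarith
        have hna : (n : ℝ) = 2 * ((a : ℝ) + 1) := by
          have h1 : ((a + 1 : ℕ) : ℝ) = ((n / 2 : ℕ) : ℝ) := by exact_mod_cast congrArg (Nat.cast : ℕ → ℝ) haeq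
          push_cast at h1
          rw [hhalfc] at h1
          linarith
        have harg : Real.pi / n + (a : ℝ) * Real.pi / n = Real.pi / 2 := by
          rw [hna]
          have : ((a : ℝ) + 1) ≠ 0 := by positivity
          field_simp
          ring
        have key : Up RotAxis.z (Real.pi / n) * Up RotAxis.z ((a : ℝ) * Real.pi / n)
            = Up RotAxis.z (Real.pi / 2) := by
          rw [Up_mul, harg]
        obtain ⟨L', D', hL', hD', heq, -, -⟩ :=
          canon_clifford_core hn hne (upU RotAxis.z (Real.pi / 2)) szU_mem hrest hD
        refine ⟨L', D', hL', hD', ?_⟩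
        rw [coe_mul, hVeq, hxz, wprod_cons, ← Matrix.mul_assoc, ← Matrix.mul_assoc, key,
          Matrix.mul_assoc]
        exact heq
    · refine ⟨(RotAxis.z, 1) :: (p, a) :: rest, D, ?_, hD, ?_⟩
      · rw [validL_cons_iff]
        refine ⟨by simpa using fun h => (hpz h.symm), ⟨le_refl 1, by omega⟩, hL⟩
      · rw [coe_mul, hVeq, hxz, wprod_cons (x := (RotAxis.z, 1)), hone, Matrix.mul_assoc]

lemma canon_mul_uz_inv {n : ℕ} (hn4 : 4 ≤ n) (hne : Even n) (x V : UG)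
    (hx : (x : Mat) = Uz (Real.pi / n)) (hV : CanonU n V) : CanonU n (x⁻¹ * V) := by
  have hn : 0 < n := by omega
  have hnR : (n : ℝ) ≠ 0 := Nat.cast_ne_zero.mpr hn.ne'
  have hh2 : 2 ≤ n / 2 := by omega
  have hhalfc : ((n / 2 : ℕ) : ℝ) = (n : ℝ) / 2 := by
    have := half_cast hn hne; linarith
  have hxz := coe_x_inv_eq x hx
  obtain ⟨L, D, hL, hD, hVeq⟩ := hV
  -- the "generic" case: prepend (z, n/2 - 1) after pushing S⁻¹ through
  have generic : (L = [] ∨ ∀ p a rest, L = (p, a) :: rest → p ≠ RotAxis.z) →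
      CanonU n (x⁻¹ * V) := by
    intro hcase
    have hsplit : Up RotAxis.z (-(Real.pi / n)) =
        Up RotAxis.z (((n / 2 - 1 : ℕ) : ℝ) * Real.pi / n) *
          (((upU RotAxis.z (Real.pi / 2))⁻¹ : UG) : Mat) := by
      rw [coe_inv]
      show _ = _ * star (Up RotAxis.z (Real.pi / 2))
      have hcast : ((n / 2 - 1 : ℕ) : ℝ) = (n : ℝ) / 2 - 1 := by
        push_cast [Nat.cast_sub (by omega : 1 ≤ n / 2)]
        rw [hhalfc]
      have harg : ((n / 2 - 1 : ℕ) : ℝ) * Real.pi / n + (-(Real.pi / 2)) = -(Real.pi / n) := by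
        rw [hcast]
        field_simp
        ring
      rw [Up_star, Up_mul, harg]
    obtain ⟨L₁, D₁, hL₁, hD₁, heq, hnil, hhd⟩ :=
      canon_clifford_core hn hne ((upU RotAxis.z (Real.pi / 2))⁻¹)
        (Subgroup.inv_mem _ szU_mem) hL hD
    refine ⟨(RotAxis.z, n / 2 - 1) :: L₁, D₁, ?_, hD₁, ?_⟩
    · rw [validL_cons_iff]
      refine ⟨?_, ⟨by omega, by omega⟩, hL₁⟩
      intro y hy
      cases L with
      | nil =>
        rw [hnil rfl] at hy
        simp at hy
      | cons hd rest =>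
        obtain ⟨p, a⟩ := hd
        have hp : p ≠ RotAxis.z := by
          rcases hcase with h | h
          · simp at h
          · exact h p a rest rfl
        obtain ⟨q, b, rest', hL₁eq, hq⟩ := hhd (p, a) rest rfl
        rw [hL₁eq] at hy
        simp at hy
        subst hy
        simp only
        intro hzq
        apply hp
        have hzz : PRel (((upU RotAxis.z (Real.pi / 2))⁻¹ : UG) : Mat) RotAxis.z RotAxis.z :=
          prel_upU_inv RotAxis.z (Real.pi / 2)
        rw [← hzq] at hq
        exact prel_right_inj hq hzz
    · rw [coe_mul, hVeq, hxz, hsplit, Matrix.mul_assoc, heq, wprod_cons, ← Matrix.mul_assoc]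
  cases L with
  | nil => exact generic (Or.inl rfl)
  | cons hd rest =>
    obtain ⟨p, a⟩ := hd
    by_cases hpz : p = RotAxis.z
    · subst hpz
      obtain ⟨hhead, ⟨ha1, ha2⟩, hrest⟩ := validL_cons_iff.mp hL
      simp only at ha1 ha2
      by_cases ha : a = 1
      · subst ha
        refine ⟨rest, D, hrest, hD, ?_⟩
        have key : Up RotAxis.z (-(Real.pi / n)) * Up RotAxis.z (((1 : ℕ) : ℝ) * Real.pi / n)
            = 1 := by
          rw [Up_mul]
          rw [show -(Real.pi / n) + ((1 : ℕ) : ℝ) * Real.pi / n = 0 by push_cast; ring]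
          exact Up_zero _
        rw [coe_mul, hVeq, hxz, wprod_cons, ← Matrix.mul_assoc, ← Matrix.mul_assoc, key,
          Matrix.one_mul]
      · refine ⟨(RotAxis.z, a - 1) :: rest, D, ?_, hD, ?_⟩
        · rw [validL_cons_iff]
          exact ⟨hhead, ⟨by omega, by omega⟩, hrest⟩
        · have key : Up RotAxis.z (-(Real.pi / n)) * Up RotAxis.z ((a : ℝ) * Real.pi / n)
              = Up RotAxis.z (((a - 1 : ℕ) : ℝ) * Real.pi / n) := by
            have harg : -(Real.pi / n) + (a : ℝ) * Real.pi / n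
                = ((a - 1 : ℕ) : ℝ) * Real.pi / n := by
              push_cast [Nat.cast_sub (by omega : 1 ≤ a)]
              field_simp
              ring
            rw [Up_mul, harg]
          rw [coe_mul, hVeq, hxz, wprod_cons, wprod_cons, ← Matrix.mul_assoc,
            ← Matrix.mul_assoc, key]
    · exact generic (Or.inr (by
        intro p' a' rest' heq'
        injection heq' with h1 h2
        injection h1 with h3 h4
        rw [← h3]
        exact hpz))

end CCC
namespace CCC

lemma uz_two_eq_smat {n : ℕ} (hn2 : n = 2) : Uz (Real.pi / n) = Smat := by
  subst hn2
  have h : Complex.exp (I * ((Real.pi / ((2:ℕ):ℝ) : ℝ) : ℂ)) = I := by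
    rw [show ((Real.pi / ((2:ℕ):ℝ) : ℝ) : ℂ) = (Real.pi : ℂ) / 2 by push_cast; norm_num]
    exact expI_pi_div_two
  rw [Uz, Smat, h]

lemma gcc_canon {n : ℕ} (hn : 0 < n) (hne : Even n) (U : UG) (hU : U ∈ Gcc n) :
    CanonU n U := by
  induction hU using Subgroup.closure_induction_left with
  | one => exact canon_one n
  | mul_left x hx y hy ih =>
    rcases hx with hC | hz
    · exact canon_mul_clifford hn hne x hC y ih
    · by_cases hn2 : n = 2
      · have hxc : x ∈ Cliff := Subgroup.subset_closure (Or.inr (by rw [hz, uz_two_eq_smat hn2]))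
        exact canon_mul_clifford hn hne x hxc y ih
      · have hn4 : 4 ≤ n := by
          have := Nat.even_iff.mp hne
          omega
        exact canon_mul_uz hn4 hne x y hz ih
  | inv_mul_cancel x hx y hy ih =>
    rcases hx with hC | hz
    · exact canon_mul_clifford hn hne x⁻¹ (Subgroup.inv_mem _ hC) y ih
    · by_cases hn2 : n = 2
      · have hxc : x ∈ Cliff := Subgroup.subset_closure (Or.inr (by rw [hz, uz_two_eq_smat hn2]))
        exact canon_mul_clifford hn hne x⁻¹ (Subgroup.inv_mem _ hxc) y ih
      · have hn4 : 4 ≤ n := by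
          have := Nat.even_iff.mp hne
          omega
        exact canon_mul_uz_inv hn4 hne x y hz ih

lemma range_map_getD {α β : Type*} (L : List α) (d : α) (f : α → β) :
    (List.range L.length).map (fun i => f (L.getD i d)) = L.map f := by
  induction L with
  | nil => simp
  | cons x L ih =>
    rw [List.length_cons, List.range_succ_eq_map, List.map_cons, List.map_map]
    congr 1

end CCC

open CCC in
/-- Every `U ∈ 𝒢ₙ` admits a canonical decomposition. -/
theorem stmt0 (n : ℕ) (hn : 0 < n) (hne : Even n)
    (U : Matrix.unitaryGroup (Fin 2) ℂ) (hU : U ∈ Gcc n) :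
    ∃ (m : ℕ) (p : ℕ → RotAxis) (a : ℕ → ℕ) (D : Matrix (Fin 2) (Fin 2) ℂ),
      IsCanonical n m p a D (U : Matrix (Fin 2) (Fin 2) ℂ) := by
  obtain ⟨L, D, ⟨hchain, hmem⟩, hD, hUeq⟩ := gcc_canon hn hne U hU
  refine ⟨L.length, fun i => (L.getD i (RotAxis.x, 0)).1, fun i => (L.getD i (RotAxis.x, 0)).2,
    D, ?_, ?_, hD, ?_⟩
  · intro i hi
    replace hchain := List.isChain_iff_getElem.mp hchain
    have h1 : i < L.length := by omega
    have h2 : i + 1 < L.length := hi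
    have := hchain i (by omega)
    show (L.getD i (RotAxis.x, 0)).1 ≠ (L.getD (i+1) (RotAxis.x, 0)).1
    rw [List.getD_eq_getElem _ _ h1, List.getD_eq_getElem _ _ h2]
    exact this
  · intro i hi
    show 1 ≤ (L.getD i (RotAxis.x, 0)).2 ∧ (L.getD i (RotAxis.x, 0)).2 < n / 2
    rw [List.getD_eq_getElem _ _ hi]
    exact hmem _ (List.getElem_mem hi)
  · rw [hUeq]
    congr 1
    rw [show (fun i => Up (L.getD i (RotAxis.x, 0)).1
        (((L.getD i (RotAxis.x, 0)).2 : ℝ) * Real.pi / n))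
      = fun i => (fun pa : RotAxis × ℕ => Up pa.1 ((pa.2 : ℝ) * Real.pi / n))
          (L.getD i (RotAxis.x, 0)) from rfl]
    rw [range_map_getD L (RotAxis.x, 0) (fun pa : RotAxis × ℕ => Up pa.1 ((pa.2 : ℝ) * Real.pi / n))]
    rfl
end

section
/- Let n be a positive even integer and θ ∈ ℝ. Then U_z(θ) ∈ 𝒢ₙ if and only if e^{iθ} = e^{iπj/n} for some integer j with 0 ≤ j ≤ 2n−1. In other words, the subgroup of z-axis rotations contained in 𝒢ₙ is exactly {U_z(πj/n) : 0 ≤ j ≤ 2n−1}. -/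
attribute [local instance] Classical.propDecidable

open Matrix Complex

lemma Uz_mem_unitary (θ : ℝ) : Uz θ ∈ Matrix.unitaryGroup (Fin 2) ℂ := by
  constructor <;>
  · ext i j
    fin_cases i <;> fin_cases j <;>
      simp [Uz, Matrix.mul_apply, Fin.sum_univ_two, Matrix.one_apply,
        Matrix.conjTranspose_apply, ← Complex.exp_conj, ← Complex.exp_add]

lemma diag_pow (a : ℂ) (j : ℕ) :
    (!![1, 0; 0, a] : Matrix (Fin 2) (Fin 2) ℂ) ^ j = !![1, 0; 0, a ^ j] := by
  induction j with
  | zero => ext i k; fin_cases i <;> fin_cases k <;> simp [Matrix.one_apply]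
  | succ m ih =>
      rw [pow_succ, pow_succ, ih]
      ext i k
      fin_cases i <;> fin_cases k <;> simp [Matrix.mul_apply, Fin.sum_univ_two]

lemma det_Uz (θ : ℝ) : (Uz θ).det = Complex.exp (I * θ) := by
  simp [Uz, Matrix.det_fin_two_of]

lemma det_H0 : H0.det = -I := by
  simp [H0, Matrix.det_fin_two_of, Matrix.det_smul]
  ring_nf
  simp [Complex.I_sq]
  ring

lemma det_Smat : Smat.det = I := by
  simp [Smat, Matrix.det_fin_two_of]

/-- The subgroup of unitaries whose determinant is a power of `exp (I π / n)`. -/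
noncomputable def detT (n : ℕ) : Subgroup (Matrix.unitaryGroup (Fin 2) ℂ) where
  carrier := {u | ∃ k : ℤ, (u : Matrix (Fin 2) (Fin 2) ℂ).det
      = Complex.exp (I * (Real.pi / n)) ^ k}
  one_mem' := ⟨0, by simp⟩
  mul_mem' := by
    rintro a b ⟨k, hk⟩ ⟨l, hl⟩
    refine ⟨k + l, ?_⟩
    have : ((a * b : Matrix.unitaryGroup (Fin 2) ℂ) : Matrix (Fin 2) (Fin 2) ℂ)
        = (a : Matrix (Fin 2) (Fin 2) ℂ) * b := rfl
    rw [this, Matrix.det_mul, hk, hl, zpow_add₀ (Complex.exp_ne_zero _)]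
  inv_mem' := by
    rintro a ⟨k, hk⟩
    refine ⟨-k, ?_⟩
    have h1 : (↑(a⁻¹) : Matrix (Fin 2) (Fin 2) ℂ) * (a : Matrix (Fin 2) (Fin 2) ℂ) = 1 := by
      have := congrArg (Subtype.val) (inv_mul_cancel a)
      exact this
    have h2 := congrArg Matrix.det h1
    rw [Matrix.det_mul, Matrix.det_one, hk] at h2
    rw [_root_.zpow_neg]
    exact eq_inv_of_mul_eq_one_left h2

lemma zeta_pow_half (n m : ℕ) (hm : 0 < m) (hnm : n = 2 * m) :
    Complex.exp (I * (Real.pi / n)) ^ (m : ℤ) = I := by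
  rw [zpow_natCast, ← Complex.exp_nat_mul]
  have h : (m : ℂ) * (I * (Real.pi / n)) = (Real.pi / 2 : ℝ) * I := by
    have hm' : (m : ℂ) ≠ 0 := Nat.cast_ne_zero.mpr hm.ne'
    subst hnm
    push_cast
    field_simp
  rw [h, Complex.exp_mul_I, ← Complex.ofReal_cos, ← Complex.ofReal_sin]
  simp [Real.cos_pi_div_two, Real.sin_pi_div_two]

lemma zeta_pow_two_n (n : ℕ) (hn : 0 < n) :
    Complex.exp (I * (Real.pi / n)) ^ ((2 * n : ℕ) : ℤ) = 1 := by
  rw [zpow_natCast, ← Complex.exp_nat_mul]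
  have h : ((2 * n : ℕ) : ℂ) * (I * (Real.pi / n)) = 2 * Real.pi * I := by
    have hn' : (n : ℂ) ≠ 0 := Nat.cast_ne_zero.mpr hn.ne'
    push_cast
    field_simp
  rw [h, Complex.exp_two_pi_mul_I]

lemma Gcc_le_detT (n : ℕ) (hn : 0 < n) (hne : Even n) : Gcc n ≤ detT n := by
  obtain ⟨m, hm⟩ := hne
  have hnm : n = 2 * m := by omega
  have hm0 : 0 < m := by omega
  have hI : Complex.exp (I * (Real.pi / n)) ^ (m : ℤ) = I := zeta_pow_half n m hm0 hnm
  rw [Gcc, Subgroup.closure_le]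
  rintro u (hu | hu)
  · -- u ∈ Cliff
    have : Cliff ≤ detT n := by
      rw [Cliff, Subgroup.closure_le]
      rintro v (hv | hv)
      · refine ⟨-(m : ℤ), ?_⟩
        rw [hv, det_H0, _root_.zpow_neg, hI]
        rw [inv_eq_one_div]
        field_simp [Complex.I_ne_zero]
        simp [Complex.I_sq]
      · exact ⟨(m : ℤ), by rw [hv, det_Smat, hI]⟩
    exact this hu
  · refine ⟨1, ?_⟩
    rw [hu, det_Uz, zpow_one]
    norm_num

/-- The subgroup of z-axis rotations contained in `𝒢ₙ` is exactly
`{U_z(πj/n) : 0 ≤ j ≤ 2n−1}`. -/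
theorem stmt4 (n : ℕ) (hn : 0 < n) (hne : Even n) (θ : ℝ) :
    (∃ u ∈ Gcc n, (u : Matrix (Fin 2) (Fin 2) ℂ) = Uz θ) ↔
      ∃ j : ℕ, j ≤ 2 * n - 1 ∧
        Complex.exp (I * θ) = Complex.exp (I * (Real.pi * j / n)) := by
  have hn' : (n : ℂ) ≠ 0 := Nat.cast_ne_zero.mpr hn.ne'
  have hexp : ∀ j : ℕ, Complex.exp (I * (Real.pi / n)) ^ j
      = Complex.exp (I * (Real.pi * j / n)) := by
    intro j
    rw [← Complex.exp_nat_mul]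
    congr 1
    field_simp
  constructor
  · rintro ⟨u, hu, huz⟩
    obtain ⟨k, hk⟩ := Gcc_le_detT n hn hne hu
    rw [huz, det_Uz] at hk
    set N : ℤ := ((2 * n : ℕ) : ℤ) with hN
    have hN0 : 0 < N := by positivity
    have hone : Complex.exp (I * (Real.pi / n)) ^ N = 1 := zeta_pow_two_n n hn
    have hsplit : Complex.exp (I * (Real.pi / n)) ^ k
        = Complex.exp (I * (Real.pi / n)) ^ (k % N) := by
      conv_lhs => rw [← Int.emod_add_mul_ediv k N]
      rw [zpow_add₀ (Complex.exp_ne_zero _),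
        show Complex.exp (I * (Real.pi / n)) ^ (N * (k / N))
          = (Complex.exp (I * (Real.pi / n)) ^ N) ^ (k / N) from zpow_mul _ _ _,
        hone, _root_.one_zpow, mul_one]
    have h0 : 0 ≤ k % N := Int.emod_nonneg k hN0.ne'
    have hlt : k % N < N := Int.emod_lt_of_pos k hN0
    refine ⟨(k % N).toNat, ?_, ?_⟩
    · omega
    · rw [hk, hsplit, ← hexp, ← zpow_natCast, Int.toNat_of_nonneg h0]
  · rintro ⟨j, hj, hθ⟩
    refine ⟨(⟨Uz (Real.pi / n), Uz_mem_unitary _⟩ :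
        Matrix.unitaryGroup (Fin 2) ℂ) ^ j, ?_, ?_⟩
    · refine pow_mem ?_ j
      apply Subgroup.subset_closure
      right
      rfl
    · have hcoe : (((⟨Uz (Real.pi / n), Uz_mem_unitary _⟩ :
          Matrix.unitaryGroup (Fin 2) ℂ) ^ j : Matrix.unitaryGroup (Fin 2) ℂ) :
          Matrix (Fin 2) (Fin 2) ℂ) = (Uz (Real.pi / n)) ^ j :=
        SubmonoidClass.coe_pow _ _
      rw [hcoe, Uz, diag_pow]
      have : Complex.exp (I * ((Real.pi / n : ℝ) : ℂ)) = Complex.exp (I * (Real.pi / n)) := by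
        norm_num
      rw [this, hexp, ← hθ, Uz]
end

section
/- Let n be a positive even integer and let a be an integer with 1 ≤ a < n/2 such that n/gcd(a,n) = 2^j for some integer j (necessarily j ≥ 2). Then c_a = 2^{1−2^{1−j}}·cos(aπ/n) is an algebraic integer which is a unit: both c_a and 1/c_a are algebraic integers. -/
noncomputable def muP (k : ℕ) : ℝ := (2:ℝ) ^ ((1:ℝ) - (2:ℝ) ^ ((1:ℝ) - (k:ℝ)))

noncomputable def CcP (b k : ℕ) : ℝ := muP k * Real.cos (b * Real.pi / 2 ^ k)

lemma two_rpow_addP (x y : ℝ) : (2:ℝ)^(x+y) = (2:ℝ)^x * (2:ℝ)^y :=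
  Real.rpow_add (by norm_num) _ _

lemma muP_sq (k : ℕ) : muP (k+1) ^ 2 = 2 * muP k := by
  have hR : 2 * muP k = (2:ℝ)^((1:ℝ) + ((1:ℝ) - 2^((1:ℝ)-(k:ℝ)))) := by
    rw [two_rpow_addP, Real.rpow_one]; rfl
  rw [hR]
  unfold muP
  rw [sq, ← two_rpow_addP]
  congr 1
  push_cast
  rw [show (1:ℝ) - ((k:ℝ)+1) = -(k:ℝ) by ring,
      show (1:ℝ) - (k:ℝ) = 1 + (-(k:ℝ)) by ring, two_rpow_addP, Real.rpow_one]
  ring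

lemma muP_one : muP 1 = 1 := by
  unfold muP
  norm_num

lemma muP_integral (k : ℕ) : IsIntegral ℤ (muP (k+1)) := by
  apply IsIntegral.of_pow (n := 2^k) (by positivity)
  have h : muP (k+1) ^ (2^k : ℕ) = (2:ℝ) ^ (2^k - 1 : ℕ) := by
    rw [← Real.rpow_natCast (muP (k+1)) (2^k), ← Real.rpow_natCast (2:ℝ) (2^k - 1)]
    unfold muP
    rw [← Real.rpow_mul (by norm_num)]
    congr 1
    have hc : ((2^k - 1 : ℕ) : ℝ) = (2:ℝ)^(k:ℝ) - 1 := by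
      rw [Nat.cast_sub Nat.one_le_two_pow]
      push_cast
      rw [← Real.rpow_natCast 2 k]
    rw [hc]
    push_cast
    rw [show (1:ℝ) - ((k:ℝ)+1) = -(k:ℝ) by ring, ← Real.rpow_natCast 2 k]
    have hk : (2:ℝ)^(-(k:ℝ)) * (2:ℝ)^((k:ℝ)) = 1 := by
      rw [← two_rpow_addP]; norm_num
    linear_combination -hk
  rw [h]
  have h2 : IsIntegral ℤ (2:ℝ) := by
    have := isIntegral_algebraMap (R := ℤ) (A := ℝ) (x := 2)
    simpa using this
  exact h2.pow _

lemma CcP_one {b : ℕ} (hb : Odd b) : CcP b 1 = 0 := by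
  obtain ⟨m, hm⟩ := hb
  unfold CcP
  have h : (b:ℝ) * Real.pi / 2^1 = m * Real.pi + Real.pi/2 := by
    subst hm; push_cast; ring
  rw [h, Real.cos_add, Real.cos_pi_div_two, Real.sin_pi_div_two, Real.sin_nat_mul_pi]
  ring

lemma CcP_sq (b k : ℕ) : CcP b (k+1) ^ 2 = muP k + CcP b k := by
  unfold CcP
  rw [mul_pow, muP_sq, Real.cos_sq]
  have h : 2 * ((b:ℝ) * Real.pi / 2^(k+1)) = (b:ℝ) * Real.pi / 2^k := by
    rw [pow_succ]
    have : (2:ℝ)^k ≠ 0 := by positivity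
    field_simp
  rw [h]
  ring

lemma keyP (b k : ℕ) :
    (muP (k+1) - CcP b (k+1)) * (muP (k+1) + CcP b (k+1)) = muP k - CcP b k := by
  have h1 := muP_sq k
  have h2 := CcP_sq b k
  linear_combination h1 - h2

lemma CcP_integral {b : ℕ} (hb : Odd b) (k : ℕ) : IsIntegral ℤ (CcP b (k+1)) := by
  induction k with
  | zero => rw [CcP_one hb]; exact isIntegral_zero
  | succ i ih =>
    apply IsIntegral.of_pow (n := 2) (by norm_num)
    rw [CcP_sq]
    exact (muP_integral i).add ih

lemma invP {b : ℕ} (hb : Odd b) (k : ℕ) :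
    (muP (k+1) - CcP b (k+1)) ≠ 0 ∧ (muP (k+1) + CcP b (k+1)) ≠ 0 ∧
    IsIntegral ℤ (muP (k+1) - CcP b (k+1))⁻¹ ∧
    IsIntegral ℤ (muP (k+1) + CcP b (k+1))⁻¹ := by
  induction k with
  | zero =>
    rw [CcP_one hb, muP_one]
    norm_num
    exact isIntegral_one
  | succ i ih =>
    obtain ⟨h1, h2, h3, h4⟩ := ih
    have hk : (muP (i+2) - CcP b (i+2)) * (muP (i+2) + CcP b (i+2))
        = muP (i+1) - CcP b (i+1) := keyP b (i+1)
    have hprod : (muP (i+2) - CcP b (i+2)) * (muP (i+2) + CcP b (i+2)) ≠ 0 := by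
      rw [hk]; exact h1
    obtain ⟨hA, hB⟩ := mul_ne_zero_iff.mp hprod
    have hAint : IsIntegral ℤ (muP (i+2) - CcP b (i+2)) :=
      (muP_integral (i+1)).sub (CcP_integral hb (i+1))
    have hBint : IsIntegral ℤ (muP (i+2) + CcP b (i+2)) :=
      (muP_integral (i+1)).add (CcP_integral hb (i+1))
    refine ⟨hA, hB, ?_, ?_⟩
    · have : (muP (i+2) - CcP b (i+2))⁻¹
          = (muP (i+2) + CcP b (i+2)) * (muP (i+1) - CcP b (i+1))⁻¹ := by
        field_simp
        linear_combination -hk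
      rw [this]
      exact hBint.mul h3
    · have : (muP (i+2) + CcP b (i+2))⁻¹
          = (muP (i+2) - CcP b (i+2)) * (muP (i+1) - CcP b (i+1))⁻¹ := by
        field_simp
        linear_combination -hk
      rw [this]
      exact hAint.mul h3



/-- If `n` is a positive even integer, `1 ≤ a < n/2` and `n/gcd(a,n) = 2^j`, then
(necessarily `j ≥ 2` and) `c_a = 2^{1−2^{1−j}}·cos(aπ/n)` is an algebraic integer
which is a unit: both `c_a` and `1/c_a` are algebraic integers. -/
theorem stmt13 (n : ℕ) (hn : 0 < n) (hne : Even n) (a j : ℕ)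
    (ha1 : 1 ≤ a) (ha2 : a < n / 2) (hj : n / Nat.gcd a n = 2 ^ j) :
    2 ≤ j ∧
    IsIntegral ℤ (Complex.ofReal
      ((2 : ℝ) ^ ((1 : ℝ) - (2 : ℝ) ^ ((1 : ℝ) - (j : ℝ))) * Real.cos (a * Real.pi / n))) ∧
    IsIntegral ℤ (Complex.ofReal
      ((2 : ℝ) ^ ((1 : ℝ) - (2 : ℝ) ^ ((1 : ℝ) - (j : ℝ))) * Real.cos (a * Real.pi / n)))⁻¹ := by
  set g := Nat.gcd a n with hg
  have hgn : g ∣ n := Nat.gcd_dvd_right a n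
  have hga : g ∣ a := Nat.gcd_dvd_left a n
  have hgpos : 0 < g := Nat.gcd_pos_of_pos_right a hn
  have hn2 : n = g * 2^j := by rw [← hj, Nat.mul_div_cancel' hgn]
  set b := a / g with hb
  have hab : a = g * b := (Nat.mul_div_cancel' hga).symm
  have hcop : Nat.Coprime b (2^j) := by
    have := Nat.coprime_div_gcd_div_gcd (m := a) (n := n) hgpos
    rwa [← hg, ← hb, hj] at this
  have hgle : g ≤ a := Nat.le_of_dvd (by omega) hga
  have hj2 : 2 ≤ j := by
    by_contra h
    push_neg at h
    interval_cases j <;> simp at hn2 <;> omega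
  have hbo : Odd b := by
    rcases Nat.even_or_odd b with he | ho
    · exfalso
      obtain ⟨m, hm⟩ := he
      have h2 : (2:ℕ) ∣ 2^j := dvd_pow_self 2 (by omega)
      have h2b : (2:ℕ) ∣ b := ⟨m, by omega⟩
      have := Nat.dvd_gcd h2b h2
      rw [hcop] at this
      omega
    · exact ho
  have hang : (a:ℝ) * Real.pi / n = (b:ℝ) * Real.pi / 2^j := by
    have hn0 : (n:ℝ) ≠ 0 := by positivity
    have h2j : ((2:ℝ)^j) ≠ 0 := by positivity
    rw [div_eq_div_iff hn0 h2j]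
    rw [hab, hn2]
    push_cast
    ring
  obtain ⟨i, rfl⟩ : ∃ i, j = i + 2 := ⟨j - 2, by omega⟩
  have hexpr : (2 : ℝ) ^ ((1 : ℝ) - (2 : ℝ) ^ ((1 : ℝ) - ((i+2 : ℕ) : ℝ)))
      * Real.cos (a * Real.pi / n) = CcP b (i+2) := by
    unfold CcP muP
    rw [hang]
  have hmap : ∀ x : ℝ, IsIntegral ℤ x → IsIntegral ℤ (Complex.ofReal x) := by
    intro x hx
    exact hx.map (Complex.ofRealHom.toIntAlgHom)
  have hCint : IsIntegral ℤ (CcP b (i+2)) := CcP_integral hbo (i+1)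
  obtain ⟨h1, h2, h3, h4⟩ := invP hbo i
  have hC2 : CcP b (i+2) ^ 2 = muP (i+1) + CcP b (i+1) := CcP_sq b (i+1)
  have hCne : CcP b (i+2) ≠ 0 := by
    intro h
    rw [h] at hC2
    simp at hC2
    exact h2 hC2.symm
  have hinv : (CcP b (i+2))⁻¹ = CcP b (i+2) * (muP (i+1) + CcP b (i+1))⁻¹ := by
    rw [← hC2]
    field_simp
  refine ⟨by omega, ?_, ?_⟩
  · rw [hexpr]
    exact hmap _ hCint
  · rw [hexpr, ← Complex.ofReal_inv]
    apply hmap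
    rw [hinv]
    exact hCint.mul h4
end
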